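/- Let τ = Σ_{i,j} τ_{ij} (E_{ij} ⊗ E_{ij}) be a maximally correlated state on ℂ^n ⊗ ℂ^n. Then the trace norm of its partial transpose satisfies ‖τ^Γ‖₁ = Σ_{i,j} |τ_{ij}|, and hence the negativity of τ equals N(τ) = (Σ_{i,j} |τ_{ij}| − 1)/2. -/

import Mathlib

open scoped Kronecker ComplexOrder
open Matrix

noncomputable def Matrix.PosSemidef.sqrt {𝕜 : Type*} [RCLike 𝕜] {n : Type*} [Fintype n]
    [DecidableEq n] {A : Matrix n n 𝕜} (hA : A.PosSemidef) : Matrix n n 𝕜 :=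
  hA.1.eigenvectorUnitary.1 * diagonal ((↑) ∘ (√·) ∘ hA.1.eigenvalues) *
  (star hA.1.eigenvectorUnitary : Matrix n n 𝕜)

noncomputable def traceNorm {ι : Type*} [Fintype ι] [DecidableEq ι] (A : Matrix ι ι ℂ) : ℝ :=
  ((Matrix.posSemidef_conjTranspose_mul_self A).sqrt.trace).re

noncomputable def l1Norm {ι κ : Type*} [Fintype ι] [Fintype κ] (A : Matrix ι κ ℂ) : ℝ :=
  ∑ i, ∑ j, ‖A i j‖

def ptranspose {α β : Type*} (ρ : Matrix (α × β) (α × β) ℂ) : Matrix (α × β) (α × β) ℂ :=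
  Matrix.of fun p q => ρ (p.1, q.2) (q.1, p.2)

noncomputable def negativity {α β : Type*} [Fintype α] [Fintype β] [DecidableEq α] [DecidableEq β]
    (ρ : Matrix (α × β) (α × β) ℂ) : ℝ :=
  (traceNorm (ptranspose ρ) - 1) / 2

def matUnit {ι : Type*} [DecidableEq ι] (i j : ι) : Matrix ι ι ℂ :=
  Matrix.single i j 1

noncomputable def mcs {n : ℕ} (t : Fin n → Fin n → ℂ) :
    Matrix (Fin n × Fin n) (Fin n × Fin n) ℂ :=
  ∑ i, ∑ j, t i j • (matUnit i j ⊗ₖ matUnit i j)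

def blockOf {m n : ℕ} (ρ : Matrix (Fin m × Fin n) (Fin m × Fin n) ℂ) (i j : Fin m) :
    Matrix (Fin n) (Fin n) ℂ :=
  Matrix.of fun k l => ρ (i, k) (j, l)

noncomputable def conjU {m n : ℕ} (U : Matrix.unitaryGroup (Fin m) ℂ)
    (ρ : Matrix (Fin m × Fin n) (Fin m × Fin n) ℂ) : Matrix (Fin m × Fin n) (Fin m × Fin n) ℂ :=
  ((U : Matrix (Fin m) (Fin m) ℂ) ⊗ₖ (1 : Matrix (Fin n) (Fin n) ℂ))ᴴ * ρ *
    ((U : Matrix (Fin m) (Fin m) ℂ) ⊗ₖ (1 : Matrix (Fin n) (Fin n) ℂ))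

noncomputable def conjUV {m n : ℕ} (U : Matrix.unitaryGroup (Fin m) ℂ)
    (V : Matrix.unitaryGroup (Fin n) ℂ)
    (ρ : Matrix (Fin m × Fin n) (Fin m × Fin n) ℂ) : Matrix (Fin m × Fin n) (Fin m × Fin n) ℂ :=
  ((U : Matrix (Fin m) (Fin m) ℂ) ⊗ₖ (V : Matrix (Fin n) (Fin n) ℂ))ᴴ * ρ *
    ((U : Matrix (Fin m) (Fin m) ℂ) ⊗ₖ (V : Matrix (Fin n) (Fin n) ℂ))

noncomputable def QNA {m n : ℕ} (ρ : Matrix (Fin m × Fin n) (Fin m × Fin n) ℂ) : ℝ :=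
  ⨅ U : Matrix.unitaryGroup (Fin m) ℂ,
    ((∑ i, ∑ j, traceNorm (blockOf (conjU U ρ) i j)) - 1) / 2

noncomputable def QNAB {m n : ℕ} (ρ : Matrix (Fin m × Fin n) (Fin m × Fin n) ℂ) : ℝ :=
  ⨅ U : Matrix.unitaryGroup (Fin m) ℂ, ⨅ V : Matrix.unitaryGroup (Fin n) ℂ,
    (l1Norm (conjUV U V ρ) - 1) / 2

/-!
The partial transpose `τ^Γ` is the monomial matrix `D P`, where `D` is diagonal with entries
`t i j` and `P` is the permutation matrix of the swap `(i, j) ↦ (j, i)`. Hence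
`(τ^Γ)ᴴ τ^Γ = Pᴴ |D|² P` is again diagonal, its square root is the diagonal matrix of the
`|t i j|`, and the trace norm is `∑ |t i j|`.
-/

open scoped MatrixOrder in
lemma Matrix.PosSemidef.sqrt_eq_cfcSqrt {ι : Type*} [Fintype ι] [DecidableEq ι]
    {A : Matrix ι ι ℂ} (hA : A.PosSemidef) : hA.sqrt = CFC.sqrt A := by
  rw [CFC.sqrt_eq_real_sqrt A (Matrix.nonneg_iff_posSemidef.mpr hA), cfcₙ_eq_cfc, hA.1.cfc_eq,
    IsHermitian.cfc, Matrix.PosSemidef.sqrt]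
  rfl

open scoped MatrixOrder in
lemma traceNorm_eq_sum_of_conjTranspose_mul_self_eq_diagonal {ι : Type*} [Fintype ι]
    [DecidableEq ι] {A : Matrix ι ι ℂ} {d : ι → ℝ} (hd : ∀ i, 0 ≤ d i)
    (hA : Aᴴ * A = diagonal fun i => (d i : ℂ) ^ 2) :
    traceNorm A = ∑ i, d i := by
  have hsqrt : (posSemidef_conjTranspose_mul_self A).sqrt = diagonal fun i => (d i : ℂ) := by
    rw [PosSemidef.sqrt_eq_cfcSqrt]
    refine CFC.sqrt_unique ?_ ?_
    · rw [diagonal_mul_diagonal, hA]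
      simp only [sq]
    · rw [nonneg_iff_posSemidef, posSemidef_diagonal_iff]
      exact fun i => Complex.zero_le_real.mpr (hd i)
  rw [traceNorm, hsqrt, trace_diagonal, Complex.re_sum]
  simp only [Complex.ofReal_re]

lemma traceNorm_diagonal_submatrix {ι : Type*} [Fintype ι] [DecidableEq ι]
    (w : ι → ℂ) (e : Equiv.Perm ι) :
    traceNorm ((diagonal w).submatrix id e) = ∑ i, ‖w i‖ := by
  have hA : ((diagonal w).submatrix id e)ᴴ * (diagonal w).submatrix id e =
      diagonal fun i => (‖w (e i)‖ : ℂ) ^ 2 := by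
    rw [conjTranspose_submatrix, ← submatrix_mul _ _ _ _ _ Function.bijective_id,
      diagonal_conjTranspose, diagonal_mul_diagonal, submatrix_diagonal_equiv]
    simp only [Function.comp_def, Pi.star_apply, RCLike.star_def, Complex.conj_mul']
  rw [traceNorm_eq_sum_of_conjTranspose_mul_self_eq_diagonal (fun i => norm_nonneg _) hA,
    Equiv.sum_comp e fun i => ‖w i‖]

lemma mcs_apply {n : ℕ} (t : Fin n → Fin n → ℂ) (a b c d : Fin n) :
    mcs t (a, b) (c, d) = if a = b ∧ c = d then t a c else 0 := by
  simp only [mcs, matUnit, Matrix.sum_apply, Matrix.smul_apply, kroneckerMap_apply, single_apply,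
    ite_and, mul_ite, mul_one, mul_zero, smul_eq_mul, Finset.sum_ite_irrel, Finset.sum_ite_eq',
    Finset.mem_univ, ↓reduceIte, Finset.sum_const_zero]
  grind

lemma ptranspose_mcs {n : ℕ} (t : Fin n → Fin n → ℂ) :
    ptranspose (mcs t) =
      (diagonal fun p : Fin n × Fin n => t p.1 p.2).submatrix id (Equiv.prodComm _ _) := by
  ext ⟨a, b⟩ ⟨c, d⟩
  simp only [ptranspose, of_apply, mcs_apply, submatrix_apply, id, Equiv.prodComm_apply,
    Prod.swap_prod_mk, diagonal_apply, Prod.mk.injEq]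
  grind

theorem stmt_1_general {n : ℕ} (t : Fin n → Fin n → ℂ) :
    traceNorm (ptranspose (mcs t)) = ∑ i, ∑ j, ‖t i j‖ ∧
    negativity (mcs t) = ((∑ i, ∑ j, ‖t i j‖) - 1) / 2 := by
  have hnorm : traceNorm (ptranspose (mcs t)) = ∑ i, ∑ j, ‖t i j‖ := by
    rw [ptranspose_mcs, traceNorm_diagonal_submatrix, Fintype.sum_prod_type]
  exact ⟨hnorm, by rw [negativity, hnorm]⟩

/-- trace norm of the partial transpose, and negativity, of a
maximally correlated state. -/
theorem stmt_1 {n : ℕ} (t : Fin n → Fin n → ℂ)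
    (hpos : (mcs t).PosSemidef) (htr : (mcs t).trace = 1) :
    traceNorm (ptranspose (mcs t)) = ∑ i, ∑ j, ‖t i j‖ ∧
    negativity (mcs t) = ((∑ i, ∑ j, ‖t i j‖) - 1) / 2 :=
  stmt_1_general t
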